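/- In a finite median graph G with basepoint z, for any vertex v the vertex \overline{v} of the downward cube C(v) opposite to v is the gate of z in C(v), i.e., \overline{v} lies on a shortest path from z to every vertex of C(v), and d(z,v) = d(z,\overline{v}) + dim C(v). -/

import Mathlib

/-- The metric interval between `u` and `v` in a graph `G`. -/
def interval {V : Type*} (G : SimpleGraph V) (u v : V) : Set V :=
  {w | G.dist u w + G.dist w v = G.dist u v}

/-- A graph is median if every triple of vertices has a unique median. -/
def MedianGraph {V : Type*} (G : SimpleGraph V) : Prop :=
  ∀ x y z : V, ∃! m : V,
    m ∈ interval G x y ∧ m ∈ interval G y z ∧ m ∈ interval G z x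

/-- The hypercube graph `Q_n`. -/
def cubeGraph (n : ℕ) : SimpleGraph (Fin n → Bool) :=
  SimpleGraph.fromRel (fun u v => (Finset.univ.filter fun i => u i ≠ v i).card = 1)

/-- The downward neighbors of `v` with respect to the basepoint `z`:
`Λ(v) = N(v) ∩ I(z,v)`. -/
def downNbrs {V : Type*} (G : SimpleGraph V) (z v : V) : Set V :=
  {u | G.Adj v u ∧ G.dist z u + 1 = G.dist z v}

/-!
Identify `C` with `Q_n` and let `a` be the label of `v`. Since `Λ(v)` has `n` elements and lies
in `C`, every cube neighbour of `v` is a downward neighbour. By induction on the Hamming distance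
`k` to `a`, every cube vertex `c` satisfies `d(z,c) = d(z,v) - k`: if `c` differs from `a` in two
coordinates `i ≠ j`, flipping them towards `a` gives a square `c, c₁, c₂, c₁₂` in which
`c₁, c₂` lie one step below `c₁₂`; were `c` not one step below `c₁`, both `c₁` and `c₂` would be
medians of `z, c, c₁₂`. The antipode `w` of `v` then satisfies `d(z,y) = d(z,w) + d(w,y)` for
every cube vertex `y`, because `d(w,y) ≤ n - k`.
-/

open Function

section Hamming

variable {ι β : Type*} [Fintype ι] [DecidableEq β]

theorem exists_ne_ne_of_one_lt_hammingDist {a b : ι → β} (h : 1 < hammingDist a b) :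
    ∃ i j, i ≠ j ∧ a i ≠ b i ∧ a j ≠ b j := by
  obtain ⟨i, hi, j, hj, hij⟩ := Finset.one_lt_card.mp h
  exact ⟨i, j, hij, (Finset.mem_filter.mp hi).2, (Finset.mem_filter.mp hj).2⟩

variable [DecidableEq ι]

theorem hammingDist_update_add_one {a b : ι → β} {i : ι} (h : a i ≠ b i) :
    hammingDist a (update b i (a i)) + 1 = hammingDist a b := by
  have hfilter : ({j | a j ≠ update b i (a i) j} : Finset ι) =
      ({j | a j ≠ b j} : Finset ι).erase i := by
    ext j
    rcases eq_or_ne j i with rfl | hne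
    · simp
    · simp [hne]
  rw [hammingDist, hfilter]
  exact Finset.card_erase_add_one (Finset.mem_filter.mpr ⟨Finset.mem_univ _, h⟩)

theorem hammingDist_update_self {b : ι → β} {i : ι} {t : β} (h : t ≠ b i) :
    hammingDist b (update b i t) = 1 := by
  have hfilter : ({j | b j ≠ update b i t j} : Finset ι) = {i} := by
    ext j
    rcases eq_or_ne j i with rfl | hne
    · simp [h.symm]
    · simp [hne]
  rw [hammingDist, hfilter, Finset.card_singleton]

theorem exists_eq_update_of_hammingDist_eq_one {a b : ι → Bool} (h : hammingDist a b = 1) :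
    ∃ i, b = update a i (!a i) := by
  obtain ⟨i, hi⟩ := Finset.card_eq_one.mp h
  have hdiff : ∀ j, a j ≠ b j ↔ j = i := fun j => by
    simpa using congrArg (j ∈ ·) hi
  refine ⟨i, funext fun j => ?_⟩
  rcases eq_or_ne j i with rfl | hne
  · rw [update_self]
    exact Bool.eq_not.mpr ((hdiff j).mpr rfl).symm
  · rw [update_of_ne hne]
    exact (not_not.mp (mt (hdiff j).mp hne)).symm

theorem hammingDist_add_hammingDist_of_eq_card {a b : ι → Bool}
    (h : hammingDist a b = Fintype.card ι) (c : ι → Bool) :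
    hammingDist a c + hammingDist c b = Fintype.card ι := by
  have hb : ∀ i, b i = !a i := fun i =>
    Bool.eq_not.mpr (Finset.mem_filter.mp (Finset.eq_univ_of_card _ h ▸ Finset.mem_univ i)).2.symm
  have hcompl : ({i | c i ≠ b i} : Finset ι) = ({i | a i ≠ c i} : Finset ι)ᶜ := by
    ext i
    simp only [Finset.mem_filter, Finset.mem_compl, Finset.mem_univ, true_and, hb]
    cases a i <;> cases c i <;> simp
  rw [hammingDist, hammingDist, hcompl, Finset.card_add_card_compl]

end Hamming

section Cube

variable {n : ℕ}

theorem cubeGraph_adj {a b : Fin n → Bool} : (cubeGraph n).Adj a b ↔ hammingDist a b = 1 := by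
  refine ⟨fun ⟨_, h⟩ => h.elim id fun h' => (hammingDist_comm a b).trans h', fun h => ⟨?_, .inl h⟩⟩
  rintro rfl
  simp at h

theorem cubeGraph_adj_update {b : Fin n → Bool} {i : Fin n} {t : Bool} (h : t ≠ b i) :
    (cubeGraph n).Adj b (update b i t) :=
  cubeGraph_adj.mpr (hammingDist_update_self h)

theorem dist_le_hammingDist {V : Type*} {G : SimpleGraph V} (f : cubeGraph n →g G)
    (a b : Fin n → Bool) : G.dist (f a) (f b) ≤ hammingDist a b := by
  induction hk : hammingDist a b generalizing b with
  | zero => simp [hammingDist_eq_zero.mp hk]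
  | succ k ih =>
    obtain ⟨i, hi⟩ := Function.ne_iff.mp ((hammingDist_pos (x := a) (y := b)).mp (by omega))
    have hadj : G.Adj (f (update b i (a i))) (f b) :=
      f.map_adj (cubeGraph_adj_update (b := b) hi).symm
    calc G.dist (f a) (f b)
        ≤ G.dist (f a) (f (update b i (a i))) + G.dist (f (update b i (a i))) (f b) :=
          hadj.reachable.dist_triangle_right _
      _ ≤ k + 1 := by
          rw [SimpleGraph.dist_eq_one_iff_adj.mpr hadj]
          have := hammingDist_update_add_one hi
          exact Nat.add_le_add_right (ih _ (by omega)) 1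

end Cube

namespace MedianGraph

variable {V : Type*} {G : SimpleGraph V}

theorem dist_eq_add_one_or_of_adj (hmed : MedianGraph G) (hconn : G.Connected) (z : V)
    {u₁ u₂ : V} (h : G.Adj u₁ u₂) :
    G.dist z u₂ = G.dist z u₁ + 1 ∨ G.dist z u₁ = G.dist z u₂ + 1 := by
  obtain ⟨m, ⟨h12, h2z, hz1⟩, -⟩ := hmed u₁ u₂ z
  simp only [interval, Set.mem_ofPred_eq] at h12 h2z hz1
  have hd : G.dist u₁ u₂ = 1 := SimpleGraph.dist_eq_one_iff_adj.mpr h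
  have hd' : G.dist u₂ u₁ = 1 := SimpleGraph.dist_eq_one_iff_adj.mpr h.symm
  have hz₁ : G.dist u₁ z = G.dist z u₁ := SimpleGraph.dist_comm
  have hz₂ : G.dist u₂ z = G.dist z u₂ := SimpleGraph.dist_comm
  rcases (show G.dist u₁ m = 0 ∨ G.dist m u₂ = 0 by omega) with h0 | h0
  · obtain rfl := hconn.dist_eq_zero_iff.mp h0
    omega
  · obtain rfl := hconn.dist_eq_zero_iff.mp h0
    omega

theorem dist_add_one_of_square (hmed : MedianGraph G) (hconn : G.Connected) (z : V)
    {b b₁ b₂ b₁₂ : V} (h₁ : G.Adj b b₁) (h₂ : G.Adj b b₂) (h₁₂ : G.Adj b₁ b₁₂)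
    (h₂₁ : G.Adj b₂ b₁₂) (hne : b ≠ b₁₂) (hne' : b₁ ≠ b₂)
    (hd₁ : G.dist z b₁ + 1 = G.dist z b₁₂) (hd₂ : G.dist z b₂ + 1 = G.dist z b₁₂) :
    G.dist z b + 1 = G.dist z b₁ := by
  refine (hmed.dist_eq_add_one_or_of_adj hconn z h₁).elim (by omega) fun hup => ?_
  have hnadj : ¬ G.Adj b b₁₂ := fun h => by
    have := hmed.dist_eq_add_one_or_of_adj hconn z h
    omega
  have hdist : G.dist b b₁₂ = 2 := by
    have hlt := hconn.one_lt_dist_of_ne_of_not_adj hne hnadj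
    have hle := h₁₂.reachable.dist_triangle_right b
    rw [SimpleGraph.dist_eq_one_iff_adj.mpr h₁, SimpleGraph.dist_eq_one_iff_adj.mpr h₁₂] at hle
    omega
  have hmedian : ∀ x, G.Adj b x → G.Adj x b₁₂ → G.dist z x + 1 = G.dist z b₁₂ →
      x ∈ interval G z b ∧ x ∈ interval G b b₁₂ ∧ x ∈ interval G b₁₂ z := fun x hbx hxb hx => by
    simp only [interval, Set.mem_ofPred_eq, SimpleGraph.dist_comm (u := b₁₂) (v := z),
      SimpleGraph.dist_comm (u := x) (v := z), SimpleGraph.dist_comm (u := b₁₂) (v := x),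
      SimpleGraph.dist_comm (u := x) (v := b), SimpleGraph.dist_eq_one_iff_adj.mpr hbx,
      SimpleGraph.dist_eq_one_iff_adj.mpr hxb]
    omega
  exact absurd ((hmed z b b₁₂).unique (hmedian b₁ h₁ h₁₂ hd₁) (hmedian b₂ h₂ h₂₁ hd₂)) hne'

variable {n : ℕ}

theorem dist_add_one_of_cube_square (hmed : MedianGraph G) (hconn : G.Connected) (z : V)
    (f : cubeGraph n ↪g G) {c : Fin n → Bool} {i j : Fin n} (hij : i ≠ j) {s t : Bool}
    (hs : s ≠ c i) (ht : t ≠ c j)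
    (h₁ : G.dist z (f (update c i s)) + 1 = G.dist z (f (update (update c i s) j t)))
    (h₂ : G.dist z (f (update c j t)) + 1 = G.dist z (f (update (update c i s) j t))) :
    G.dist z (f c) + 1 = G.dist z (f (update c i s)) := by
  have hcomm : update (update c i s) j t = update (update c j t) i s := update_comm hij s t c
  refine hmed.dist_add_one_of_square hconn z
    (f.map_adj_iff.mpr (cubeGraph_adj_update hs)) (f.map_adj_iff.mpr (cubeGraph_adj_update ht))
    (f.map_adj_iff.mpr (cubeGraph_adj_update (by rwa [update_of_ne hij.symm])))
    (f.map_adj_iff.mpr (hcomm ▸ cubeGraph_adj_update (by rwa [update_of_ne hij])))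
    (f.injective.ne fun h => ?_) (f.injective.ne fun h => ?_) h₁ (hcomm ▸ h₂)
  · exact hs (by simpa [update_of_ne hij] using (congrFun h i).symm)
  · exact hs (by simpa [update_of_ne hij] using congrFun h i)

theorem dist_add_hammingDist_eq (hmed : MedianGraph G) (hconn : G.Connected) (z : V)
    (f : cubeGraph n ↪g G) (a : Fin n → Bool)
    (hdown : ∀ c, hammingDist a c = 1 → G.dist z (f c) + 1 = G.dist z (f a)) (c : Fin n → Bool) :
    G.dist z (f c) + hammingDist a c = G.dist z (f a) := by
  induction hk : hammingDist a c using Nat.strong_induction_on generalizing c with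
  | _ k ih =>
  match k with
  | 0 => simp [← hammingDist_eq_zero.mp hk]
  | 1 => exact hdown c hk
  | k + 2 =>
    obtain ⟨i, j, hij, hi, hj⟩ := exists_ne_ne_of_one_lt_hammingDist (a := a) (b := c) (by omega)
    have hj' : a j ≠ update c i (a i) j := by rwa [update_of_ne hij.symm]
    have e₁ := hammingDist_update_add_one hi
    have e₂ := hammingDist_update_add_one hj
    have e₁₂ := hammingDist_update_add_one hj'
    have ih₁ := ih (k + 1) (by omega) (update c i (a i)) (by omega)
    have ih₂ := ih (k + 1) (by omega) (update c j (a j)) (by omega)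
    have ih₁₂ := ih k (by omega) (update (update c i (a i)) j (a j)) (by omega)
    have := hmed.dist_add_one_of_cube_square hconn z f hij hi hj (by omega) (by omega)
    omega

theorem antipode_mem_interval (hmed : MedianGraph G) (hconn : G.Connected) (z : V)
    (f : cubeGraph n ↪g G) {a e : Fin n → Bool}
    (hdown : ∀ c, hammingDist a c = 1 → G.dist z (f c) + 1 = G.dist z (f a))
    (he : hammingDist a e = n) :
    (∀ c, f e ∈ interval G z (f c)) ∧ G.dist z (f a) = G.dist z (f e) + n := by
  have hdist := hmed.dist_add_hammingDist_eq hconn z f a hdown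
  refine ⟨fun c => ?_, by rw [← hdist e, he]⟩
  have hgeod := hammingDist_add_hammingDist_of_eq_card (he.trans (Fintype.card_fin n).symm) c
  have hce := dist_le_hammingDist f.toHom c e
  have htri : G.dist z (f c) ≤ G.dist z (f e) + G.dist (f e) (f c) := hconn.dist_triangle
  simp only [interval, Set.mem_ofPred_eq, SimpleGraph.dist_comm (u := f e) (v := f c)] at htri ⊢
  have := hdist c
  have := hdist e
  rw [Fintype.card_fin] at hgeod
  simp only [RelEmbedding.coe_toRelHom] at hce
  omega

end MedianGraph

/-- Since `Λ(f a)` has `n` elements and lies among the `n` cube neighbours of `f a`, it consists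
of all of them. -/
theorem dist_add_one_of_downNbrs {V : Type*} {G : SimpleGraph V} {n : ℕ} (z : V)
    (f : cubeGraph n ↪g G) (a : Fin n → Bool) (hΛ : downNbrs G z (f a) ⊆ Set.range f)
    (hcard : (downNbrs G z (f a)).ncard = n) (c : Fin n → Bool) (hc : hammingDist a c = 1) :
    G.dist z (f c) + 1 = G.dist z (f a) := by
  set nbrs := (fun i => f (update a i (!a i))) '' Set.univ
  have hsub : downNbrs G z (f a) ⊆ nbrs := fun u hu => by
    obtain ⟨d, rfl⟩ := hΛ hu
    obtain ⟨i, rfl⟩ := exists_eq_update_of_hammingDist_eq_one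
      (cubeGraph_adj.mp (f.map_adj_iff.mp hu.1))
    exact ⟨i, trivial, rfl⟩
  have hle : nbrs.ncard ≤ n := (Set.ncard_image_le).trans (by simp)
  have heq := Set.eq_of_subset_of_ncard_le hsub (hle.trans hcard.ge)
  obtain ⟨i, rfl⟩ := exists_eq_update_of_hammingDist_eq_one hc
  exact (heq ▸ ⟨i, trivial, rfl⟩ : f (update a i (!a i)) ∈ downNbrs G z (f a)).2

theorem median_opposite_is_gate_general {V : Type*} (G : SimpleGraph V)
    (hconn : G.Connected) (hmed : MedianGraph G) (z v : V)
    (C : Set V) (n : ℕ)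
    (hiso : Nonempty (G.induce C ≃g cubeGraph n))
    (hv : v ∈ C) (hΛ : downNbrs G z v ⊆ C)
    (hdim : n = (downNbrs G z v).ncard)
    (w : V) (hw : w ∈ C) (hopp : G.dist v w = n) :
    (∀ y ∈ C, w ∈ interval G z y) ∧ G.dist z v = G.dist z w + n := by
  obtain ⟨φ⟩ := hiso
  let f : cubeGraph n ↪g G := (SimpleGraph.Embedding.induce C).comp φ.symm.toEmbedding
  have hf : ∀ y (hy : y ∈ C), f (φ ⟨y, hy⟩) = y := fun y hy => by simp [f]
  have hdown := dist_add_one_of_downNbrs z f (φ ⟨v, hv⟩)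
    (by rw [hf]; exact fun u hu => ⟨_, hf u (hΛ hu)⟩) (by rw [hf, hdim])
  have he : hammingDist (φ ⟨v, hv⟩) (φ ⟨w, hw⟩) = n := by
    have := dist_le_hammingDist f.toHom (φ ⟨v, hv⟩) (φ ⟨w, hw⟩)
    simp only [RelEmbedding.coe_toRelHom, hf, hopp] at this
    exact le_antisymm (hammingDist_le_card_fintype.trans_eq (Fintype.card_fin n)) this
  obtain ⟨hgate, hdist⟩ := hmed.antipode_mem_interval hconn z f hdown he
  rw [hf, hf] at hdist
  exact ⟨fun y hy => by simpa only [hf] using hgate (φ ⟨y, hy⟩), hdist⟩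

/-- In a finite median graph with basepoint `z`, the vertex `w` of the downward cube
`C(v)` opposite to `v` is the gate of `z` in `C(v)`, and
`d(z,v) = d(z,w) + dim C(v)`. -/
theorem median_opposite_is_gate {V : Type*} [Fintype V] (G : SimpleGraph V)
    (hconn : G.Connected) (hmed : MedianGraph G) (z v : V)
    (C : Set V) (n : ℕ)
    (hiso : Nonempty (G.induce C ≃g cubeGraph n))
    (hv : v ∈ C) (hΛ : downNbrs G z v ⊆ C)
    (hdim : n = (downNbrs G z v).ncard)
    (w : V) (hw : w ∈ C) (hopp : G.dist v w = n) :
    (∀ y ∈ C, w ∈ interval G z y) ∧ G.dist z v = G.dist z w + n :=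
  median_opposite_is_gate_general G hconn hmed z v C n hiso hv hΛ hdim w hw hopp
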